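/- (Correctness of the Ho-Kalman-Kung algorithm.) Suppose the system of order n is controllable (rank C_n = n) and observable (rank O_n = n), and let N ≥ n+1 and H ≥ n. Let the Markov-parameter block Hankel matrix H ∈ ℝ^{pN×mH}, whose (i,j)-th p×m block is C A^{i+j−2} B, be factorized as H = O C' with O ∈ ℝ^{pN×n} of full column rank n and C' ∈ ℝ^{n×mH} of full row rank n. Define C_s ∈ ℝ^{p×n} as the first p rows of O, B_s ∈ ℝ^{n×m} as the first m columns of C', and A_s = O⁻ O_shift ∈ ℝ^{n×n}, where O_shift is the submatrix of O consisting of its last p(N−1) rows and O⁻ is any left inverse of the submatrix of O consisting of its first p(N−1) rows. Then the identified realization reproduces all Markov parameters: C_s A_s^k B_s = C A^k B for every k ≥ 0. -/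

import Mathlib

/-!
The extended observability matrix `Ob` (block rows `C A^i`) and controllability matrix `Cb`
(block columns `A^j B`) factor the Hankel matrix, `Hankel = Ob * Cb`. They contain the rank-`n`
matrices `O_n` and `C_n` as blocks, so `Ob` has a left and `Cb` a right inverse, and then any other
factorization `Hankel = O * C'` through `n` dimensions differs from it by the invertible
`T = C' R` (`R` a right inverse of `Cb`): `O = Ob * T⁻¹`, `C' = T * Cb`. Reading off blocks gives `C_s = C T⁻¹`, `B_s = T B`, and the shift
structure of `Ob` gives `A_s = T A T⁻¹`, so `C_s A_s^k B_s = C A^k B`.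
-/

open Matrix

namespace Matrix

section OneSidedInverse

variable {K : Type*} [Field K] {m n : Type*} [Fintype m] [Fintype n]

theorem exists_mul_eq_one_of_rank_eq_card_height [DecidableEq m] {M : Matrix m n K}
    (h : M.rank = Fintype.card m) : ∃ R : Matrix n m K, M * R = 1 := by
  rw [← mulVec_surjective_iff_exists_right_inverse]
  have hrange : LinearMap.range M.mulVecLin = ⊤ :=
    Submodule.eq_top_of_finrank_eq (by rw [← rank, h, Module.finrank_fintype_fun_eq_card])
  exact LinearMap.range_eq_top.mp hrange

theorem exists_mul_eq_one_of_rank_eq_card_width [DecidableEq n] {M : Matrix m n K}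
    (h : M.rank = Fintype.card n) : ∃ L : Matrix n m K, L * M = 1 := by
  obtain ⟨R, hR⟩ := exists_mul_eq_one_of_rank_eq_card_height (M := Mᵀ) (by rwa [rank_transpose])
  exact ⟨Rᵀ, by rw [← transpose_transpose M, ← transpose_mul, hR, transpose_one]⟩

end OneSidedInverse

section Submatrix

variable {R : Type*} [Semiring R] {m m' n n' : Type*} [DecidableEq m] [DecidableEq n]

theorem exists_mul_eq_one_of_mul_submatrix_eq_one [Fintype m] [Fintype m'] {M : Matrix m n R}
    {L : Matrix n m' R} (e : m' → m) (h : L * M.submatrix e id = 1) :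
    ∃ L' : Matrix n m R, L' * M = 1 := by
  have hsel : (1 : Matrix m m R).submatrix e id * M = M.submatrix e id := by
    simpa using one_submatrix_mul e (Equiv.refl m) M
  exact ⟨L * (1 : Matrix m m R).submatrix e id, by rw [Matrix.mul_assoc, hsel, h]⟩

theorem exists_mul_eq_one_of_submatrix_mul_eq_one [Fintype n] [Fintype n'] {M : Matrix m n R}
    {R' : Matrix n' m R} (e : n' → n) (h : M.submatrix id e * R' = 1) :
    ∃ R'' : Matrix n m R, M * R'' = 1 := by
  have hsel : M * (1 : Matrix n n R).submatrix id e = M.submatrix id e := by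
    simpa using mul_submatrix_one (Equiv.refl n) e M
  exact ⟨(1 : Matrix n n R).submatrix id e * R', by rw [← Matrix.mul_assoc, hsel, h]⟩

end Submatrix

variable {R : Type*} [CommRing R] {σ r s : Type*} [Fintype σ] [DecidableEq σ] [Fintype r]
  [Fintype s]

theorem exists_unit_of_mul_eq_mul {Ob O : Matrix r σ R} {Cb C' : Matrix σ s R}
    {L : Matrix σ r R} {R' : Matrix s σ R} (hL : L * Ob = 1) (hR : Cb * R' = 1)
    (h : Ob * Cb = O * C') :
    ∃ T : (Matrix σ σ R)ˣ, O = Ob * (↑T⁻¹ : Matrix σ σ R) ∧ C' = (T : Matrix σ σ R) * Cb := by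
  have hOT : O * (C' * R') = Ob := by
    rw [← Matrix.mul_assoc, ← h, Matrix.mul_assoc, hR, Matrix.mul_one]
  have hSC : L * O * C' = Cb := by
    rw [Matrix.mul_assoc, ← h, ← Matrix.mul_assoc, hL, Matrix.one_mul]
  have hST : L * O * (C' * R') = 1 := by rw [← Matrix.mul_assoc, hSC, hR]
  have hTS : C' * R' * (L * O) = 1 := mul_eq_one_comm.mp hST
  refine ⟨⟨C' * R', L * O, hTS, hST⟩, ?_, ?_⟩
  · rw [Units.inv_mk, ← hOT, Matrix.mul_assoc, hTS, Matrix.mul_one]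
  · rw [Units.val_mk, ← hSC, ← Matrix.mul_assoc, hTS, Matrix.one_mul]

theorem mul_mul_mul_inv_eq_conj {Ob : Matrix r σ R} {Y : Matrix σ r R} {T : (Matrix σ σ R)ˣ}
    (h : Y * (Ob * (↑T⁻¹ : Matrix σ σ R)) = 1) (Z : Matrix σ σ R) :
    Y * (Ob * (Z * (↑T⁻¹ : Matrix σ σ R))) = (T : Matrix σ σ R) * Z * (↑T⁻¹ : Matrix σ σ R) := by
  have hY : Y * Ob = T := Units.mul_inv_eq_one.mp (by rwa [← Matrix.mul_assoc] at h)
  rw [← Matrix.mul_assoc, hY, Matrix.mul_assoc]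

end Matrix

section Realization

variable {R : Type*} [Semiring R] {σ ι κ τ : Type*} [Fintype σ] [DecidableEq σ]
  (A : Matrix σ σ R) (B : Matrix σ κ R) (C : Matrix ι σ R)

def obsvMatrix (N : ℕ) : Matrix (Fin N × ι) σ R :=
  Matrix.of fun ia => (C * A ^ (ia.1 : ℕ)) ia.2

def ctrbMatrix (H : ℕ) : Matrix σ (Fin H × κ) R :=
  Matrix.of fun c jb => (A ^ (jb.1 : ℕ) * B) c jb.2

variable {A B C}

theorem obsvMatrix_mul_apply {N : ℕ} (S : Matrix σ τ R) (i : Fin N) (a : ι) (c : τ) :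
    (obsvMatrix A C N * S) (i, a) c = (C * A ^ (i : ℕ) * S) a c := by
  simp only [mul_apply, obsvMatrix, Matrix.of_apply]

theorem mul_ctrbMatrix_apply {H : ℕ} (T : Matrix τ σ R) (c : τ) (j : Fin H) (b : κ) :
    (T * ctrbMatrix A B H) c (j, b) = (T * A ^ (j : ℕ) * B) c b := by
  rw [Matrix.mul_assoc]
  simp only [mul_apply, ctrbMatrix, Matrix.of_apply]

theorem obsvMatrix_mul_ctrbMatrix_apply [Fintype ι] {N H : ℕ} (i : Fin N) (a : ι) (j : Fin H)
    (b : κ) : (obsvMatrix A C N * ctrbMatrix A B H) (i, a) (j, b) =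
      (C * A ^ ((i : ℕ) + (j : ℕ)) * B) a b := by
  rw [obsvMatrix_mul_apply, mul_ctrbMatrix_apply, pow_add, Matrix.mul_assoc C]

theorem obsvMatrix_submatrix_castLE {N N' : ℕ} (h : N' ≤ N) :
    (obsvMatrix A C N).submatrix (Prod.map (Fin.castLE h) id) id = obsvMatrix A C N' :=
  rfl

theorem ctrbMatrix_submatrix_castLE {H H' : ℕ} (h : H' ≤ H) :
    (ctrbMatrix A B H).submatrix id (Prod.map (Fin.castLE h) id) = ctrbMatrix A B H' :=
  rfl

end Realization

section FullRank

variable {K : Type*} [Field K] {σ ι κ : Type*} [Fintype σ] [DecidableEq σ]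
  {A : Matrix σ σ K} {B : Matrix σ κ K} {C : Matrix ι σ K}

theorem exists_mul_obsvMatrix_eq_one [Fintype ι] [DecidableEq ι] {N N' : ℕ} (h : N' ≤ N)
    (hrank : (obsvMatrix A C N').rank = Fintype.card σ) :
    ∃ L : Matrix σ (Fin N × ι) K, L * obsvMatrix A C N = 1 := by
  obtain ⟨L, hL⟩ := exists_mul_eq_one_of_rank_eq_card_width hrank
  exact exists_mul_eq_one_of_mul_submatrix_eq_one _ (L := L)
    (by rwa [obsvMatrix_submatrix_castLE h])

theorem exists_ctrbMatrix_mul_eq_one [Fintype κ] [DecidableEq κ] {H H' : ℕ} (h : H' ≤ H)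
    (hrank : (ctrbMatrix A B H').rank = Fintype.card σ) :
    ∃ R : Matrix (Fin H × κ) σ K, ctrbMatrix A B H * R = 1 := by
  obtain ⟨R, hR⟩ := exists_mul_eq_one_of_rank_eq_card_height hrank
  exact exists_mul_eq_one_of_submatrix_mul_eq_one _ (R' := R)
    (by rwa [ctrbMatrix_submatrix_castLE h])

end FullRank

/-- Correctness of the Ho-Kalman-Kung algorithm: for a controllable and observable system
of order `n`, with `N ≥ n+1` and `H ≥ n` (and `H ≥ 1` so that the first block column is
well defined), any full-rank factorization `Hankel = O * C'` of the Markov-parameter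
block Hankel matrix yields, via `C_s` = first `p` rows of `O`, `B_s` = first `m` columns
of `C'`, and `A_s = O⁻ O_shift` (with `O⁻` any left inverse of the first `p(N−1)` rows of
`O` and `O_shift` its last `p(N−1)` rows), a realization reproducing all Markov
parameters: `C_s A_s^k B_s = C A^k B` for every `k`. -/
theorem ho_kalman_kung_correct
    {n m p : ℕ} (N H : ℕ) (hN : n + 1 ≤ N) (hH : n ≤ H) (hH0 : 0 < H)
    (A : Matrix (Fin n) (Fin n) ℝ) (B : Matrix (Fin n) (Fin m) ℝ)
    (C : Matrix (Fin p) (Fin n) ℝ)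
    -- controllability and observability of the true system
    (ctrb : Matrix (Fin n) (Fin n × Fin m) ℝ)
    (hctrb : ∀ c : Fin n, ∀ i : Fin n, ∀ b : Fin m, ctrb c (i, b) = (A ^ (i : ℕ) * B) c b)
    (obsv : Matrix (Fin n × Fin p) (Fin n) ℝ)
    (hobsv : ∀ i : Fin n, ∀ a : Fin p, ∀ c : Fin n, obsv (i, a) c = (C * A ^ (i : ℕ)) a c)
    (hcontrollable : ctrb.rank = n)
    (hobservable : obsv.rank = n)
    -- the Markov-parameter Hankel matrix and its full-rank factorization
    (Hankel : Matrix (Fin N × Fin p) (Fin H × Fin m) ℝ)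
    (hHankel : ∀ i : Fin N, ∀ a : Fin p, ∀ j : Fin H, ∀ b : Fin m,
      Hankel (i, a) (j, b) = (C * A ^ ((i : ℕ) + (j : ℕ)) * B) a b)
    (O : Matrix (Fin N × Fin p) (Fin n) ℝ) (C' : Matrix (Fin n) (Fin H × Fin m) ℝ)
    (hfact : Hankel = O * C')
    -- the identified realization
    (Cs : Matrix (Fin p) (Fin n) ℝ)
    (hCs : ∀ a : Fin p, ∀ c : Fin n, Cs a c = O (⟨0, by omega⟩, a) c)
    (Bs : Matrix (Fin n) (Fin m) ℝ)
    (hBs : ∀ c : Fin n, ∀ b : Fin m, Bs c b = C' c (⟨0, hH0⟩, b))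
    (Ofirst : Matrix (Fin (N - 1) × Fin p) (Fin n) ℝ)
    (hOfirst : ∀ i : Fin (N - 1), ∀ a : Fin p, ∀ c : Fin n,
      Ofirst (i, a) c = O (⟨(i : ℕ), by omega⟩, a) c)
    (Oshift : Matrix (Fin (N - 1) × Fin p) (Fin n) ℝ)
    (hOshift : ∀ i : Fin (N - 1), ∀ a : Fin p, ∀ c : Fin n,
      Oshift (i, a) c = O (⟨(i : ℕ) + 1, by omega⟩, a) c) :
    ∀ Ominus : Matrix (Fin n) (Fin (N - 1) × Fin p) ℝ,
      Ominus * Ofirst = 1 →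
      ∀ k : ℕ, Cs * (Ominus * Oshift) ^ k * Bs = C * A ^ k * B := by
  intro Ominus hOminus k
  have hobsv' : obsv = obsvMatrix A C n := by ext ⟨i, a⟩ c; exact hobsv i a c
  have hctrb' : ctrb = ctrbMatrix A B n := by ext c ⟨i, b⟩; exact hctrb c i b
  obtain ⟨L, hL⟩ := exists_mul_obsvMatrix_eq_one (by omega : n ≤ N)
    (by rw [← hobsv', hobservable, Fintype.card_fin])
  obtain ⟨R, hR⟩ := exists_ctrbMatrix_mul_eq_one hH
    (by rw [← hctrb', hcontrollable, Fintype.card_fin])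
  have hHankel' : obsvMatrix A C N * ctrbMatrix A B H = O * C' := by
    rw [← hfact]; ext ⟨i, a⟩ ⟨j, b⟩; rw [hHankel, obsvMatrix_mul_ctrbMatrix_apply]
  obtain ⟨T, hO, hC'⟩ := exists_unit_of_mul_eq_mul hL hR hHankel'
  have hCs' : Cs = C * (↑T⁻¹ : Matrix (Fin n) (Fin n) ℝ) := by
    ext a c; rw [hCs, hO, obsvMatrix_mul_apply, pow_zero, Matrix.mul_one]
  have hBs' : Bs = (T : Matrix (Fin n) (Fin n) ℝ) * B := by
    ext c b; rw [hBs, hC', mul_ctrbMatrix_apply, pow_zero, Matrix.mul_one]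
  have hOfirst' : Ofirst = obsvMatrix A C (N - 1) * (↑T⁻¹ : Matrix (Fin n) (Fin n) ℝ) := by
    ext ⟨i, a⟩ c; rw [hOfirst, hO, obsvMatrix_mul_apply, obsvMatrix_mul_apply]
  have hOshift' :
      Oshift = obsvMatrix A C (N - 1) * (A * (↑T⁻¹ : Matrix (Fin n) (Fin n) ℝ)) := by
    ext ⟨i, a⟩ c
    rw [hOshift, hO, obsvMatrix_mul_apply, obsvMatrix_mul_apply, pow_succ, Matrix.mul_assoc C,
      Matrix.mul_assoc C, Matrix.mul_assoc]
  rw [hCs', hBs', hOshift', mul_mul_mul_inv_eq_conj (hOfirst' ▸ hOminus), Units.conj_pow]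
  simp [Matrix.mul_assoc]
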